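/- arXiv:0906.5052 — 2 statements merged into one kernel-verified Lean document; each statement's English description precedes it below -/
import Mathlib

section
/- Let R be a curvature-like tensor on V satisfying the quaternionic Kähler curvature relations with associated alternating bilinear form η₁, and let ρ be its Ricci tensor. Then for all x,y,z,w ∈ V: R(J₂x,J₂y,J₂z,J₂w) = R(J₃x,J₃y,J₃z,J₃w) = R(x,y,z,w) − (1/n)·g(x,J₁y)·ρ(J₁z,w) + (1/n)·ρ(J₂x,J₃y)·g(J₁z,w), and moreover R(J₁x,J₁y,J₁z,J₁w) = R(x,y,z,w). -/
/-! With `A x y` and `P x y` the endomorphisms `g`-dual to `R(·, x, y, ·)` and `R(x, y, ·, ·)`,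
the Bianchi identity gives `A y x = A x y + P x y`, and `A y x` is the `g`-adjoint of `A x y`,
so `tr (J₁ A y x) = -tr (J₁ A x y)`. The `J₂`-relation reads `J₂ P J₂ = -P + η(x, y) J₁`; as
`J₂ J₁ J₂ = J₁`, multiplying by `J₁` and taking traces gives `tr (J₁ P x y) = -2n η(x, y)`.
Hence `tr (J₁ A x y) = n η(x, y)`, and since `A x (J₁ y) = J₁ A x y` this is
`ρ(x, J₁ y) = n η(x, y)`. Substituting into the `J₂`-relation applied to both pairs gives the
`J₂`-identity; the `J₃`-identity follows from it by `J₁`-invariance, as `J₃ = J₁ J₂`. -/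

open LinearMap Module

section AdjointTrace

variable {K V : Type*} [Field K] [AddCommGroup V] [Module K V]

theorem LinearMap.BilinForm.isAdjointPair_neg_of_isometry {B : LinearMap.BilinForm K V}
    {J : Module.End K V} (hJ : ∀ x, J (J x) = -x) (hBJ : ∀ x y, B (J x) (J y) = B x y) :
    IsAdjointPair B B J ⇑(-J) := fun x y => by
  have h := hBJ x (J y)
  simp only [hJ, map_neg] at h
  rw [LinearMap.neg_apply, map_neg]
  linear_combination -h

theorem LinearMap.BilinForm.isAdjointPair_self_of_antiIsometry {B : LinearMap.BilinForm K V}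
    {J : Module.End K V} (hJ : ∀ x, J (J x) = -x) (hBJ : ∀ x y, B (J x) (J y) = -B x y) :
    IsAdjointPair B B J J := fun x y => by
  have h := hBJ x (J y)
  simp only [hJ, map_neg] at h
  linear_combination -h

theorem LinearMap.BilinForm.Nondegenerate.end_ext {g : LinearMap.BilinForm K V}
    (hg : g.Nondegenerate) {f f' : Module.End K V} (h : ∀ u v, g (f u) v = g (f' u) v) :
    f = f' :=
  g.compLeft_injective hg (LinearMap.ext₂ h)

variable [FiniteDimensional K V]

theorem LinearMap.BilinForm.trace_eq_of_isAdjointPair {B : LinearMap.BilinForm K V}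
    (hB : B.Nondegenerate) {f f' : Module.End K V} (h : IsAdjointPair B B f f') :
    trace K V f = trace K V f' := by
  have hconj : f' = (B.flip.toDual hB.flip).symm.conj (Dual.transpose (R := K) f) := by
    ext y
    apply (B.flip.toDual hB.flip).injective
    ext x
    simp only [LinearEquiv.conj_apply, LinearMap.comp_apply, LinearEquiv.coe_coe,
      LinearEquiv.symm_symm, LinearEquiv.apply_symm_apply, Dual.transpose_apply,
      BilinForm.toDual_def, flip_apply]
    exact (h x y).symm
  rw [hconj, trace_conj', trace_transpose']

end AdjointTrace

structure IsCurvatureLike {K V : Type*} [CommRing K] [AddCommGroup V] [Module K V]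
    (R : V →ₗ[K] V →ₗ[K] V →ₗ[K] V →ₗ[K] K) : Prop where
  antisymm_left : ∀ x y z w, R x y z w = -R y x z w
  antisymm_right : ∀ x y z w, R x y z w = -R x y w z
  pair_symm : ∀ x y z w, R x y z w = R z w x y
  bianchi : ∀ x y z w, R x y z w + R y z x w + R z x y w = 0

theorem IsCurvatureLike.apply_left_eq_of_apply_right {K V : Type*} [CommRing K] [AddCommGroup V]
    [Module K V] {R : V →ₗ[K] V →ₗ[K] V →ₗ[K] V →ₗ[K] K} (hR : IsCurvatureLike R)
    {J : Module.End K V} (hQK1 : ∀ x y z w, R x y (J z) (J w) = R x y z w) (x y z w : V) :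
    R (J x) (J y) z w = R x y z w := by
  rw [hR.pair_symm, hQK1, ← hR.pair_symm]

section CurvatureEndomorphisms

variable {K V : Type*} [Field K] [AddCommGroup V] [Module K V] [FiniteDimensional K V]
  {g : LinearMap.BilinForm K V} (hg : g.Nondegenerate) (R : V →ₗ[K] V →ₗ[K] V →ₗ[K] V →ₗ[K] K)

noncomputable def ricciEnd (x y : V) : Module.End K V :=
  BilinForm.symmCompOfNondegenerate ((R.flip x).flip y) g hg

noncomputable def curvatureEnd (x y : V) : Module.End K V :=
  BilinForm.symmCompOfNondegenerate (R x y) g hg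

noncomputable def ricci (x y : V) : K :=
  trace K V (ricciEnd hg R x y)

theorem ricciEnd_apply (x y u v : V) : g (ricciEnd hg R x y u) v = R u x y v :=
  BilinForm.symmCompOfNondegenerate_left_apply _ hg v u

theorem curvatureEnd_apply (x y u v : V) : g (curvatureEnd hg R x y u) v = R x y u v :=
  BilinForm.symmCompOfNondegenerate_left_apply _ hg v u

variable {hg R}

theorem IsCurvatureLike.ricciEnd_swap (hR : IsCurvatureLike R) (x y : V) :
    ricciEnd hg R y x = ricciEnd hg R x y + curvatureEnd hg R x y :=
  hg.end_ext fun u v => by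
    rw [LinearMap.add_apply, map_add, LinearMap.add_apply, ricciEnd_apply, ricciEnd_apply,
      curvatureEnd_apply]
    linear_combination hR.antisymm_left u y x v - hR.bianchi u x y v

theorem IsCurvatureLike.isAdjointPair_ricciEnd_swap (hR : IsCurvatureLike R) (hgs : g.IsSymm)
    (x y : V) : IsAdjointPair g g (ricciEnd hg R y x) (ricciEnd hg R x y) := fun u v => by
  rw [hgs.eq u, ricciEnd_apply, ricciEnd_apply]
  linear_combination hR.pair_symm u y x v + hR.antisymm_left x v u y - hR.antisymm_right v x u y

variable {J J1 J2 : Module.End K V} {η : LinearMap.BilinForm K V}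

theorem IsCurvatureLike.trace_mul_ricciEnd_swap (hR : IsCurvatureLike R) (hgs : g.IsSymm)
    (hJ : IsAdjointPair g g J ⇑(-J)) (x y : V) :
    trace K V (J * ricciEnd hg R y x) = -trace K V (J * ricciEnd hg R x y) := by
  rw [g.trace_eq_of_isAdjointPair hg (hJ.mul (hR.isAdjointPair_ricciEnd_swap hgs x y)), mul_neg,
    map_neg, trace_mul_comm]

theorem two_mul_trace_mul_curvatureEnd (hJ1 : J1 * J1 = -1) (hJ2 : IsAdjointPair g g J2 J2)
    (hJ212 : J2 * J1 * J2 = J1)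
    (hQK2 : ∀ x y z w, R x y (J2 z) (J2 w) = -R x y z w + η x y * g (J1 z) w) (x y : V) :
    2 * trace K V (J1 * curvatureEnd hg R x y) = -(finrank K V * η x y) := by
  set P := curvatureEnd hg R x y
  have hconj : J2 * P * J2 = -P + η x y • J1 := hg.end_ext fun u v => by
    simp only [Module.End.mul_apply, LinearMap.add_apply, LinearMap.neg_apply,
      LinearMap.smul_apply, hJ2 _ v, map_add, map_neg, map_smul, LinearMap.add_apply,
      LinearMap.neg_apply, LinearMap.smul_apply, smul_eq_mul, P, curvatureEnd_apply, hQK2]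
  have hcycle : trace K V (J1 * (J2 * P * J2)) = trace K V (J1 * P) := by
    rw [← mul_assoc, trace_mul_comm, ← mul_assoc, ← mul_assoc, hJ212]
  rw [hconj, mul_add, mul_neg, mul_smul_comm, hJ1, map_add, map_neg, map_smul, map_neg,
    trace_one, smul_eq_mul] at hcycle
  linear_combination -hcycle

theorem IsCurvatureLike.four_mul_trace_mul_ricciEnd (hR : IsCurvatureLike R) (hgs : g.IsSymm)
    (hJ1 : ∀ x, J1 (J1 x) = -x) (hgJ1 : ∀ x y, g (J1 x) (J1 y) = g x y)
    (hJ2 : ∀ x, J2 (J2 x) = -x) (hgJ2 : ∀ x y, g (J2 x) (J2 y) = -g x y)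
    (hJ212 : ∀ x, J2 (J1 (J2 x)) = J1 x)
    (hQK2 : ∀ x y z w, R x y (J2 z) (J2 w) = -R x y z w + η x y * g (J1 z) w) (x y : V) :
    4 * trace K V (J1 * ricciEnd hg R x y) = finrank K V * η x y := by
  have hswap := hR.trace_mul_ricciEnd_swap (hg := hg) hgs
    (g.isAdjointPair_neg_of_isometry hJ1 hgJ1) x y
  have hcurv := two_mul_trace_mul_curvatureEnd (hg := hg) (LinearMap.ext hJ1)
    (g.isAdjointPair_self_of_antiIsometry hJ2 hgJ2) (LinearMap.ext hJ212) hQK2 x y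
  rw [hR.ricciEnd_swap, mul_add, map_add] at hswap
  linear_combination 2 * hswap - hcurv

theorem ricciEnd_map_right (hJ : ∀ x, J (J x) = -x) (hJg : IsAdjointPair g g J ⇑(-J))
    (hQK1 : ∀ x y z w, R x y (J z) (J w) = R x y z w) (x y : V) :
    ricciEnd hg R x (J y) = J * ricciEnd hg R x y := hg.end_ext fun u v => by
  have h := hQK1 u x y (J v)
  rw [hJ, map_neg] at h
  rw [Module.End.mul_apply, hJg, LinearMap.neg_apply, map_neg, ricciEnd_apply, ricciEnd_apply, ← h,
    neg_neg]

theorem IsCurvatureLike.ricciEnd_map_left (hR : IsCurvatureLike R) (hJ : ∀ x, J (J x) = -x)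
    (hQK1 : ∀ x y z w, R x y (J z) (J w) = R x y z w) (x y : V) :
    ricciEnd hg R (J x) y = -(ricciEnd hg R x y * J) := hg.end_ext fun u v => by
  have h := hR.apply_left_eq_of_apply_right hQK1 u (J x) y v
  rw [hJ, map_neg, LinearMap.neg_apply, LinearMap.neg_apply] at h
  rw [LinearMap.neg_apply, map_neg, LinearMap.neg_apply, Module.End.mul_apply, ricciEnd_apply,
    ricciEnd_apply, ← h]

theorem IsCurvatureLike.four_mul_ricci_map_right (hR : IsCurvatureLike R) (hgs : g.IsSymm)
    (hJ1 : ∀ x, J1 (J1 x) = -x) (hgJ1 : ∀ x y, g (J1 x) (J1 y) = g x y)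
    (hJ2 : ∀ x, J2 (J2 x) = -x) (hgJ2 : ∀ x y, g (J2 x) (J2 y) = -g x y)
    (hJ212 : ∀ x, J2 (J1 (J2 x)) = J1 x) (hQK1 : ∀ x y z w, R x y (J1 z) (J1 w) = R x y z w)
    (hQK2 : ∀ x y z w, R x y (J2 z) (J2 w) = -R x y z w + η x y * g (J1 z) w) (x y : V) :
    4 * ricci hg R x (J1 y) = finrank K V * η x y := by
  rw [ricci, ricciEnd_map_right hJ1 (g.isAdjointPair_neg_of_isometry hJ1 hgJ1) hQK1,
    hR.four_mul_trace_mul_ricciEnd hgs hJ1 hgJ1 hJ2 hgJ2 hJ212 hQK2]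

theorem IsCurvatureLike.four_mul_ricci_map_left (hR : IsCurvatureLike R) (hgs : g.IsSymm)
    (hJ1 : ∀ x, J1 (J1 x) = -x) (hgJ1 : ∀ x y, g (J1 x) (J1 y) = g x y)
    (hJ2 : ∀ x, J2 (J2 x) = -x) (hgJ2 : ∀ x y, g (J2 x) (J2 y) = -g x y)
    (hJ212 : ∀ x, J2 (J1 (J2 x)) = J1 x) (hQK1 : ∀ x y z w, R x y (J1 z) (J1 w) = R x y z w)
    (hQK2 : ∀ x y z w, R x y (J2 z) (J2 w) = -R x y z w + η x y * g (J1 z) w) (x y : V) :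
    4 * ricci hg R (J1 x) y = -(finrank K V * η x y) := by
  rw [ricci, hR.ricciEnd_map_left hJ1 hQK1, map_neg, trace_mul_comm, mul_neg,
    hR.four_mul_trace_mul_ricciEnd hgs hJ1 hgJ1 hJ2 hgJ2 hJ212 hQK2]

end CurvatureEndomorphisms

theorem IsCurvatureLike.apply_J2_J2_J2_J2 {K V : Type*} [CommRing K] [AddCommGroup V]
    [Module K V] {R : V →ₗ[K] V →ₗ[K] V →ₗ[K] V →ₗ[K] K} (hR : IsCurvatureLike R)
    {g η : LinearMap.BilinForm K V} {J1 J2 : Module.End K V}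
    (hQK2 : ∀ x y z w, R x y (J2 z) (J2 w) = -R x y z w + η x y * g (J1 z) w) (x y z w : V) :
    R (J2 x) (J2 y) (J2 z) (J2 w) =
      R x y z w - η z w * g (J1 x) y + η (J2 x) (J2 y) * g (J1 z) w := by
  linear_combination hQK2 (J2 x) (J2 y) z w - hR.pair_symm (J2 x) (J2 y) z w - hQK2 z w x y
    - hR.pair_symm x y z w

theorem stmt10_general
    (n : ℕ) (hn : 1 ≤ n)
    (V : Type) [AddCommGroup V] [Module ℝ V] [FiniteDimensional ℝ V]
    (hdim : Module.finrank ℝ V = 4 * n)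
    (J1 J2 J3 : V →ₗ[ℝ] V)
    (hJ1 : ∀ x, J1 (J1 x) = -x) (hJ2 : ∀ x, J2 (J2 x) = -x)
    (h123 : ∀ x, J1 x = J2 (J3 x))
    (h312 : ∀ x, J3 x = J1 (J2 x))
    (g : V →ₗ[ℝ] V →ₗ[ℝ] ℝ)
    (hgsymm : ∀ x y, g x y = g y x)
    (hgnd : ∀ x, (∀ y, g x y = 0) → x = 0)
    (hgJ1 : ∀ x y, g (J1 x) (J1 y) = g x y)
    (hgJ2 : ∀ x y, g (J2 x) (J2 y) = -g x y)
    (R : V →ₗ[ℝ] V →ₗ[ℝ] V →ₗ[ℝ] V →ₗ[ℝ] ℝ)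
    (hRa : ∀ x y z w, R x y z w = -R y x z w)
    (hRb : ∀ x y z w, R x y z w = -R x y w z)
    (hRp : ∀ x y z w, R x y z w = R z w x y)
    (hRbianchi : ∀ x y z w, R x y z w + R y z x w + R z x y w = 0)
    (η : V →ₗ[ℝ] V →ₗ[ℝ] ℝ)
    (hQK1 : ∀ x y z w, R x y (J1 z) (J1 w) = R x y z w)
    (hQK2 : ∀ x y z w, R x y (J2 z) (J2 w) = -R x y z w + η x y * g (J1 z) w)
    (ρ : V → V → ℝ)
    (hρ : ∀ x y, ∀ A : Module.End ℝ V, (∀ z w, g (A z) w = R z x y w) → ρ x y = LinearMap.trace ℝ V A)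
    :
    ∀ x y z w,
      R (J1 x) (J1 y) (J1 z) (J1 w) = R x y z w ∧
      R (J2 x) (J2 y) (J2 z) (J2 w) =
        R x y z w - (1 / (n : ℝ)) * g x (J1 y) * ρ (J1 z) w
          + (1 / (n : ℝ)) * ρ (J2 x) (J3 y) * g (J1 z) w ∧
      R (J3 x) (J3 y) (J3 z) (J3 w) =
        R x y z w - (1 / (n : ℝ)) * g x (J1 y) * ρ (J1 z) w
          + (1 / (n : ℝ)) * ρ (J2 x) (J3 y) * g (J1 z) w := by
  have hg : BilinForm.Nondegenerate g := .ofSeparatingLeft hgnd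
  have hgs : BilinForm.IsSymm g := ⟨hgsymm⟩
  have hR : IsCurvatureLike R := ⟨hRa, hRb, hRp, hRbianchi⟩
  have hJ212 : ∀ x, J2 (J1 (J2 x)) = J1 x := fun x => by rw [← h312, ← h123]
  have hρ_ricci : ∀ x y, ρ x y = ricci hg R x y := fun x y => hρ x y _ (ricciEnd_apply hg R x y)
  have hfin : (finrank ℝ V : ℝ) = 4 * n := by rw [hdim]; push_cast; ring
  have hn0 : (n : ℝ) ≠ 0 := Nat.cast_ne_zero.mpr (by omega)
  have hJ1_J1 : ∀ x y z w, R (J1 x) (J1 y) (J1 z) (J1 w) = R x y z w := fun x y z w => by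
    rw [hR.apply_left_eq_of_apply_right hQK1, hQK1]
  have hJ2_J2 : ∀ x y z w, R (J2 x) (J2 y) (J2 z) (J2 w) =
      R x y z w - (1 / (n : ℝ)) * g x (J1 y) * ρ (J1 z) w
        + (1 / (n : ℝ)) * ρ (J2 x) (J3 y) * g (J1 z) w := fun x y z w => by
    have hleft := hR.four_mul_ricci_map_left (hg := hg) hgs hJ1 hgJ1 hJ2 hgJ2 hJ212 hQK1 hQK2
      z w
    have hright := hR.four_mul_ricci_map_right (hg := hg) hgs hJ1 hgJ1 hJ2 hgJ2 hJ212 hQK1 hQK2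
      (J2 x) (J2 y)
    have hskew := BilinForm.isAdjointPair_neg_of_isometry hJ1 hgJ1 x y
    rw [hfin] at hleft hright
    rw [LinearMap.neg_apply, map_neg] at hskew
    rw [hR.apply_J2_J2_J2_J2 hQK2, hρ_ricci, hρ_ricci, h312]
    field_simp
    linear_combination -(η z w * n) * hskew + g x (J1 y) / 4 * hleft - g (J1 z) w / 4 * hright
  intro x y z w
  refine ⟨hJ1_J1 x y z w, hJ2_J2 x y z w, ?_⟩
  have h := hJ1_J1 (J2 x) (J2 y) (J2 z) (J2 w)
  simp only [← h312] at h
  rw [h, hJ2_J2]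

theorem stmt10
    (n : ℕ) (hn : 1 ≤ n)
    (V : Type) [AddCommGroup V] [Module ℝ V] [FiniteDimensional ℝ V]
    (hdim : Module.finrank ℝ V = 4 * n)
    (J1 J2 J3 : V →ₗ[ℝ] V)
    (hJ1 : ∀ x, J1 (J1 x) = -x) (hJ2 : ∀ x, J2 (J2 x) = -x) (hJ3 : ∀ x, J3 (J3 x) = -x)
    (h123 : ∀ x, J1 x = J2 (J3 x)) (h132 : ∀ x, J1 x = -J3 (J2 x))
    (h231 : ∀ x, J2 x = J3 (J1 x)) (h213 : ∀ x, J2 x = -J1 (J3 x))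
    (h312 : ∀ x, J3 x = J1 (J2 x)) (h321 : ∀ x, J3 x = -J2 (J1 x))
    (g : V →ₗ[ℝ] V →ₗ[ℝ] ℝ)
    (hgsymm : ∀ x y, g x y = g y x)
    (hgnd : ∀ x, (∀ y, g x y = 0) → x = 0)
    (hgJ1 : ∀ x y, g (J1 x) (J1 y) = g x y)
    (hgJ2 : ∀ x y, g (J2 x) (J2 y) = -g x y)
    (hgJ3 : ∀ x y, g (J3 x) (J3 y) = -g x y)
    (R : V →ₗ[ℝ] V →ₗ[ℝ] V →ₗ[ℝ] V →ₗ[ℝ] ℝ)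
    (hRa : ∀ x y z w, R x y z w = -R y x z w)
    (hRb : ∀ x y z w, R x y z w = -R x y w z)
    (hRp : ∀ x y z w, R x y z w = R z w x y)
    (hRbianchi : ∀ x y z w, R x y z w + R y z x w + R z x y w = 0)
    (η : V →ₗ[ℝ] V →ₗ[ℝ] ℝ)
    (hηalt : ∀ x y, η x y = -η y x)
    (hQK1 : ∀ x y z w, R x y (J1 z) (J1 w) = R x y z w)
    (hQK2 : ∀ x y z w, R x y (J2 z) (J2 w) = -R x y z w + η x y * g (J1 z) w)
    (hQK3 : ∀ x y z w, R x y (J3 z) (J3 w) = -R x y z w + η x y * g (J1 z) w)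
    (ρ : V → V → ℝ)
    (hρ : ∀ x y, ∀ A : Module.End ℝ V, (∀ z w, g (A z) w = R z x y w) → ρ x y = LinearMap.trace ℝ V A)
    :
    ∀ x y z w,
      R (J1 x) (J1 y) (J1 z) (J1 w) = R x y z w ∧
      R (J2 x) (J2 y) (J2 z) (J2 w) =
        R x y z w - (1 / (n : ℝ)) * g x (J1 y) * ρ (J1 z) w
          + (1 / (n : ℝ)) * ρ (J2 x) (J3 y) * g (J1 z) w ∧
      R (J3 x) (J3 y) (J3 z) (J3 w) =
        R x y z w - (1 / (n : ℝ)) * g x (J1 y) * ρ (J1 z) w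
          + (1 / (n : ℝ)) * ρ (J2 x) (J3 y) * g (J1 z) w :=
  stmt10_general n hn V hdim J1 J2 J3 hJ1 hJ2 h123 h312 g hgsymm hgnd hgJ1 hgJ2 R hRa hRb hRp
    hRbianchi η hQK1 hQK2 ρ hρ
end

section
/- For each cyclic permutation (α,β,γ) of (1,2,3), the square norm of the bilinear map A_α(x,y) = ω_γ(x)J_βy − ω_β(x)J_γy satisfies ‖A_α‖² = 4n·(ε_β·ω_γ(Ω_γ) + ε_γ·ω_β(Ω_β)). -/
/-!
Expanding the square, the double sum splits into products of a sum over `i` of products of the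
`ω`'s and a sum over `k` of `g (J eₖ) (J' ẽₖ)` with `J, J' ∈ {J_β, J_γ}`. Since `J² = -1` and `J`
scales `g` by `ε`, we have `g (J x) y = -ε g x (J y)`, so the sum over `k` is `-ε · tr (J J')`:
it is `ε · 4n` when `J = J'` and vanishes otherwise, as anticommuting endomorphisms have a
traceless product. The surviving sums over `i` are `ω_γ(Ω_γ)` and `ω_β(Ω_β)`.
-/

open Module

section

variable {R M ι : Type*} [CommRing R] [AddCommGroup M] [Module R M]

theorem LinearMap.trace_mul_eq_zero_of_anticomm [IsAddTorsionFree R] {A B : M →ₗ[R] M}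
    (h : A * B = -(B * A)) : LinearMap.trace R M (A * B) = 0 := by
  have hBA := LinearMap.trace_mul_comm R A B
  rw [h, map_neg, neg_eq_self] at hBA
  rwa [h, map_neg, neg_eq_zero]

theorem apply_left_eq_neg_mul_apply_right {g : M →ₗ[R] M →ₗ[R] R} {J : M →ₗ[R] M} {ε : R}
    (hJ : ∀ x, J (J x) = -x) (hgJ : ∀ x y, g (J x) (J y) = ε * g x y) (x y : M) :
    g (J x) y = -ε * g x (J y) := by
  have h := hgJ x (J y)
  rw [hJ, map_neg] at h
  linear_combination -h

def IsDualBasis [DecidableEq ι] (g : M →ₗ[R] M →ₗ[R] R) (e f : Basis ι R M) : Prop :=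
  ∀ i j, g (f i) (e j) = if i = j then 1 else 0

noncomputable def sqNorm [Fintype ι] (g : M →ₗ[R] M →ₗ[R] R) (e f : Basis ι R M)
    (A : M → M → M) : R :=
  ∑ i, ∑ k, g (A (e i) (e k)) (A (f i) (f k))

variable [DecidableEq ι] {g : M →ₗ[R] M →ₗ[R] R} {e f : Basis ι R M}

theorem IsDualBasis.symm (hg : ∀ x y, g x y = g y x) (h : IsDualBasis g e f) :
    IsDualBasis g f e := by
  intro i j
  rw [hg, h]
  exact if_congr eq_comm rfl rfl

variable [Fintype ι]

namespace IsDualBasis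

theorem repr_apply (h : IsDualBasis g e f) (x : M) (i : ι) : e.repr x i = g (f i) x := by
  conv_rhs => rw [← e.sum_repr x]
  simp only [map_sum, map_smul, h i, smul_eq_mul, mul_ite, mul_one, mul_zero, Finset.sum_ite_eq,
    Finset.mem_univ, if_true]

theorem trace_eq_sum (h : IsDualBasis g e f) (T : M →ₗ[R] M) :
    LinearMap.trace R M T = ∑ k, g (f k) (T (e k)) := by
  rw [LinearMap.trace_eq_matrix_trace R e]
  simp only [Matrix.trace, Matrix.diag_apply, LinearMap.toMatrix_apply, h.repr_apply]

theorem sum_apply_self (h : IsDualBasis g e f) : ∑ k, g (f k) (e k) = Fintype.card ι := by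
  simp [h _ _]

theorem sum_mul_eq (hg : ∀ x y, g x y = g y x) (h : IsDualBasis g e f) {ω : M →ₗ[R] R} {Ω : M}
    (hΩ : ∀ x, g Ω x = ω x) (φ : M →ₗ[R] R) : ∑ i, φ (e i) * ω (f i) = φ Ω := by
  conv_rhs => rw [← e.sum_repr Ω]
  simp only [map_sum, map_smul, smul_eq_mul, h.repr_apply, hg (f _) Ω, hΩ]
  exact Finset.sum_congr rfl fun i _ => mul_comm _ _

end IsDualBasis

theorem sum_apply_apply_eq_neg_mul_trace (hg : ∀ x y, g x y = g y x) (h : IsDualBasis g e f)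
    {P : M →ₗ[R] M} {ε : R} (hP : ∀ x, P (P x) = -x) (hgP : ∀ x y, g (P x) (P y) = ε * g x y)
    (Q : M →ₗ[R] M) : ∑ k, g (P (e k)) (Q (f k)) = -ε * LinearMap.trace R M (P * Q) := by
  simp only [apply_left_eq_neg_mul_apply_right hP hgP, ← Finset.mul_sum, (h.symm hg).trace_eq_sum,
    Module.End.mul_apply]

theorem sqNorm_smul_sub_smul [IsAddTorsionFree R] (hg : ∀ x y, g x y = g y x)
    (h : IsDualBasis g e f) {P Q : M →ₗ[R] M} {εP εQ : R}
    (hP : ∀ x, P (P x) = -x) (hQ : ∀ x, Q (Q x) = -x) (hPQ : ∀ x, P (Q x) = -Q (P x))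
    (hgP : ∀ x y, g (P x) (P y) = εP * g x y) (hgQ : ∀ x y, g (Q x) (Q y) = εQ * g x y)
    {a b : M →ₗ[R] R} {Ωa Ωb : M} (ha : ∀ x, g Ωa x = a x) (hb : ∀ x, g Ωb x = b x) :
    sqNorm g e f (fun x y => a x • P y - b x • Q y) =
      Fintype.card ι * (εP * a Ωa + εQ * b Ωb) := by
  have hPP : ∑ k, g (P (e k)) (P (f k)) = εP * Fintype.card ι := by
    simp only [hgP, ← Finset.mul_sum, (h.symm hg).sum_apply_self]
  have hQQ : ∑ k, g (Q (e k)) (Q (f k)) = εQ * Fintype.card ι := by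
    simp only [hgQ, ← Finset.mul_sum, (h.symm hg).sum_apply_self]
  have hPQ₀ : ∑ k, g (P (e k)) (Q (f k)) = 0 := by
    rw [sum_apply_apply_eq_neg_mul_trace hg h hP hgP,
      LinearMap.trace_mul_eq_zero_of_anticomm (LinearMap.ext hPQ), mul_zero]
  have hQP₀ : ∑ k, g (Q (e k)) (P (f k)) = 0 := by
    rw [sum_apply_apply_eq_neg_mul_trace hg h hQ hgQ,
      LinearMap.trace_mul_eq_zero_of_anticomm (LinearMap.ext fun x => by simp [hPQ]), mul_zero]
  calc sqNorm g e f (fun x y => a x • P y - b x • Q y)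
      = ∑ i, ∑ k, (a (e i) * a (f i) * g (P (e k)) (P (f k))
          - a (e i) * b (f i) * g (P (e k)) (Q (f k))
          - b (e i) * a (f i) * g (Q (e k)) (P (f k))
          + b (e i) * b (f i) * g (Q (e k)) (Q (f k))) := by
        refine Finset.sum_congr rfl fun i _ => Finset.sum_congr rfl fun k _ => ?_
        simp only [map_sub, map_smul, LinearMap.sub_apply, LinearMap.smul_apply, smul_eq_mul]
        ring
    _ = (∑ i, a (e i) * a (f i)) * ∑ k, g (P (e k)) (P (f k))
          - (∑ i, a (e i) * b (f i)) * ∑ k, g (P (e k)) (Q (f k))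
          - (∑ i, b (e i) * a (f i)) * ∑ k, g (Q (e k)) (P (f k))
          + (∑ i, b (e i) * b (f i)) * ∑ k, g (Q (e k)) (Q (f k)) := by
        simp only [Finset.sum_mul_sum, Finset.sum_add_distrib, Finset.sum_sub_distrib]
    _ = Fintype.card ι * (εP * a Ωa + εQ * b Ωb) := by
        rw [h.sum_mul_eq hg ha a, h.sum_mul_eq hg hb b, hPP, hQQ, hPQ₀, hQP₀]
        ring

end

theorem stmt13_general
    (n : ℕ)
    (V : Type) [AddCommGroup V] [Module ℝ V]
    (J1 J2 J3 : V →ₗ[ℝ] V)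
    (hJ1 : ∀ x, J1 (J1 x) = -x) (hJ2 : ∀ x, J2 (J2 x) = -x) (hJ3 : ∀ x, J3 (J3 x) = -x)
    (h123 : ∀ x, J1 x = J2 (J3 x)) (h132 : ∀ x, J1 x = -J3 (J2 x))
    (h231 : ∀ x, J2 x = J3 (J1 x)) (h213 : ∀ x, J2 x = -J1 (J3 x))
    (h312 : ∀ x, J3 x = J1 (J2 x)) (h321 : ∀ x, J3 x = -J2 (J1 x))
    (g : V →ₗ[ℝ] V →ₗ[ℝ] ℝ)
    (hgsymm : ∀ x y, g x y = g y x)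
    (hgJ1 : ∀ x y, g (J1 x) (J1 y) = g x y)
    (hgJ2 : ∀ x y, g (J2 x) (J2 y) = -g x y)
    (hgJ3 : ∀ x y, g (J3 x) (J3 y) = -g x y)
    (ω1 ω2 ω3 : V →ₗ[ℝ] ℝ)
    (Ω1 Ω2 Ω3 : V)
    (hΩ1 : ∀ x, g Ω1 x = ω1 x) (hΩ2 : ∀ x, g Ω2 x = ω2 x) (hΩ3 : ∀ x, g Ω3 x = ω3 x)
    :
    ∀ (e f : Module.Basis (Fin (4 * n)) ℝ V),
      (∀ i j, g (f i) (e j) = if i = j then 1 else 0) →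
      ((∑ i, ∑ k, g (ω3 (e i) • J2 (e k) - ω2 (e i) • J3 (e k))
                     (ω3 (f i) • J2 (f k) - ω2 (f i) • J3 (f k)))
          = 4 * (n : ℝ) * (-ω3 Ω3 - ω2 Ω2) ∧
       (∑ i, ∑ k, g (ω1 (e i) • J3 (e k) - ω3 (e i) • J1 (e k))
                     (ω1 (f i) • J3 (f k) - ω3 (f i) • J1 (f k)))
          = 4 * (n : ℝ) * (-ω1 Ω1 + ω3 Ω3) ∧
       (∑ i, ∑ k, g (ω2 (e i) • J1 (e k) - ω1 (e i) • J2 (e k))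
                     (ω2 (f i) • J1 (f k) - ω1 (f i) • J2 (f k)))
          = 4 * (n : ℝ) * (ω2 Ω2 - ω1 Ω1)) := by
  intro e f hef
  have hε1 : ∀ x y, g (J1 x) (J1 y) = 1 * g x y := by simpa using hgJ1
  have hε2 : ∀ x y, g (J2 x) (J2 y) = -1 * g x y := by simpa using hgJ2
  have hε3 : ∀ x y, g (J3 x) (J3 y) = -1 * g x y := by simpa using hgJ3
  refine ⟨?_, ?_, ?_⟩
  · refine (sqNorm_smul_sub_smul hgsymm hef hJ2 hJ3 (fun x => (h123 x).symm.trans (h132 x))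
      hε2 hε3 hΩ3 hΩ2).trans ?_
    rw [Fintype.card_fin]; push_cast; ring
  · refine (sqNorm_smul_sub_smul hgsymm hef hJ3 hJ1 (fun x => (h231 x).symm.trans (h213 x))
      hε3 hε1 hΩ1 hΩ3).trans ?_
    rw [Fintype.card_fin]; push_cast; ring
  · refine (sqNorm_smul_sub_smul hgsymm hef hJ1 hJ2 (fun x => (h312 x).symm.trans (h321 x))
      hε1 hε2 hΩ2 hΩ1).trans ?_
    rw [Fintype.card_fin]; push_cast; ring

theorem stmt13
    (n : ℕ) (hn : 1 ≤ n)
    (V : Type) [AddCommGroup V] [Module ℝ V] [FiniteDimensional ℝ V]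
    (hdim : Module.finrank ℝ V = 4 * n)
    (J1 J2 J3 : V →ₗ[ℝ] V)
    (hJ1 : ∀ x, J1 (J1 x) = -x) (hJ2 : ∀ x, J2 (J2 x) = -x) (hJ3 : ∀ x, J3 (J3 x) = -x)
    (h123 : ∀ x, J1 x = J2 (J3 x)) (h132 : ∀ x, J1 x = -J3 (J2 x))
    (h231 : ∀ x, J2 x = J3 (J1 x)) (h213 : ∀ x, J2 x = -J1 (J3 x))
    (h312 : ∀ x, J3 x = J1 (J2 x)) (h321 : ∀ x, J3 x = -J2 (J1 x))
    (g : V →ₗ[ℝ] V →ₗ[ℝ] ℝ)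
    (hgsymm : ∀ x y, g x y = g y x)
    (hgnd : ∀ x, (∀ y, g x y = 0) → x = 0)
    (hgJ1 : ∀ x y, g (J1 x) (J1 y) = g x y)
    (hgJ2 : ∀ x y, g (J2 x) (J2 y) = -g x y)
    (hgJ3 : ∀ x y, g (J3 x) (J3 y) = -g x y)
    (ω1 ω2 ω3 : V →ₗ[ℝ] ℝ)
    (Ω1 Ω2 Ω3 : V)
    (hΩ1 : ∀ x, g Ω1 x = ω1 x) (hΩ2 : ∀ x, g Ω2 x = ω2 x) (hΩ3 : ∀ x, g Ω3 x = ω3 x)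
    :
    ∀ (e f : Module.Basis (Fin (4 * n)) ℝ V),
      (∀ i j, g (f i) (e j) = if i = j then 1 else 0) →
      ((∑ i, ∑ k, g (ω3 (e i) • J2 (e k) - ω2 (e i) • J3 (e k))
                     (ω3 (f i) • J2 (f k) - ω2 (f i) • J3 (f k)))
          = 4 * (n : ℝ) * (-ω3 Ω3 - ω2 Ω2) ∧
       (∑ i, ∑ k, g (ω1 (e i) • J3 (e k) - ω3 (e i) • J1 (e k))
                     (ω1 (f i) • J3 (f k) - ω3 (f i) • J1 (f k)))
          = 4 * (n : ℝ) * (-ω1 Ω1 + ω3 Ω3) ∧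
       (∑ i, ∑ k, g (ω2 (e i) • J1 (e k) - ω1 (e i) • J2 (e k))
                     (ω2 (f i) • J1 (f k) - ω1 (f i) • J2 (f k)))
          = 4 * (n : ℝ) * (ω2 Ω2 - ω1 Ω1)) :=
  stmt13_general n V J1 J2 J3 hJ1 hJ2 hJ3 h123 h132 h231 h213 h312 h321 g hgsymm hgJ1 hgJ2 hgJ3 ω1
    ω2 ω3 Ω1 Ω2 Ω3 hΩ1 hΩ2 hΩ3
end
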